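/- arXiv:1110.3436 — 2 statements merged into one kernel-verified Lean document; each statement's English description precedes it below -/
import Mathlib

section
/- Let F be a cumulative distribution function on ℝ with density f > 0 on (x_F, x^F), quantile function Q(t) = inf{x : F(x) ≥ t}, and quantile density q(x) = 1/f(Q(x)). If the differential entropy H = -∫_ℝ f(x) log f(x) dx is finite, then H = ∫_0^1 log(q(x)) dx. -/
/-!
The quantile transform pushes the uniform distribution on `(0, 1)` forward to the law with cdf
`F`: for `0 < u < 1` we have `Q u ≤ x ↔ u ≤ F x`, so `Q` is monotone (hence measurable) on
`(0, 1)` and the pushforward gives `Iic x` mass `F x`. That law is `f dx`, so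
`∫₀¹ log q = -∫₀¹ log f(Q u) du = -∫ log f · f dx`.
-/

open MeasureTheory Filter Set Topology
open scoped ENNReal

theorem locallyIntegrable_of_forall_integrableOn_Iic {E : Type*} [NormedAddCommGroup E]
    {f : ℝ → E} (hf : ∀ x, IntegrableOn f (Iic x)) : LocallyIntegrable f :=
  fun x => ⟨Iic (x + 1), Iic_mem_nhds (lt_add_one x), hf _⟩

section Primitive

variable {E : Type*} [NormedAddCommGroup E] [NormedSpace ℝ E] {f : ℝ → E}

theorem integrableOn_Iic_of_tendsto_integral_Iic {c : E} (hc : c ≠ 0)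
    (h : Tendsto (fun x => ∫ t in Iic x, f t) atTop (𝓝 c)) (x : ℝ) : IntegrableOn f (Iic x) := by
  by_contra hx
  have hzero : ∀ᶠ y in atTop, ∫ t in Iic y, f t = 0 := by
    filter_upwards [eventually_ge_atTop x] with y hy
    exact integral_undef fun hy' => hx (IntegrableOn.mono_set hy' (Iic_subset_Iic.2 hy))
  exact hc (tendsto_nhds_unique h (tendsto_const_nhds.congr' (hzero.mono fun _ h => h.symm)))

theorem continuous_integral_Iic (hf : ∀ x, IntegrableOn f (Iic x)) :
    Continuous fun x => ∫ t in Iic x, f t := by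
  have hii : ∀ a b, IntervalIntegrable f volume a b := fun a b =>
    intervalIntegrable_iff.2 ((hf (max a b)).mono_set fun _ ht => ht.2)
  refine ((continuous_const (y := ∫ t in Iic 0, f t)).add
    (intervalIntegral.continuous_primitive hii 0)).congr fun x => ?_
  rw [Pi.add_apply, ← intervalIntegral.integral_Iic_sub_Iic (hf 0) (hf x), add_sub_cancel]

end Primitive

theorem integral_withDensity_ofReal_eq_integral_smul {α E : Type*} [MeasurableSpace α]
    [NormedAddCommGroup E] [NormedSpace ℝ E] {μ : Measure α} {f : α → ℝ} (hf : AEMeasurable f μ)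
    (hf0 : 0 ≤ᵐ[μ] f) (g : α → E) :
    ∫ x, g x ∂μ.withDensity (fun x => ENNReal.ofReal (f x)) = ∫ x, f x • g x ∂μ := by
  refine (integral_withDensity_eq_integral_smul₀ hf.real_toNNReal g).trans
    (integral_congr_ae (hf0.mono fun x hx => ?_))
  simp only [NNReal.smul_def, Real.coe_toNNReal _ hx]

theorem volume_Iic_inter_Ioo {a b c : ℝ} (hc : c ≤ b) :
    volume (Iic c ∩ Ioo a b) = ENNReal.ofReal (c - a) :=
  le_antisymm
    ((measure_mono (t := Ioc a c) fun _ hu => ⟨hu.2.1, hu.1⟩).trans_eq Real.volume_Ioc)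
    (Real.volume_Ioo.symm.trans_le
      (measure_mono (s := Ioo a c) fun _ hu => ⟨hu.2.le, hu.1, hu.2.trans_le hc⟩))

noncomputable def quantile (F : ℝ → ℝ) (u : ℝ) : ℝ := sInf {x | u ≤ F x}

section Quantile

variable {F : ℝ → ℝ}

theorem quantile_le_iff (hF : Continuous F) (hmono : Monotone F) {u : ℝ}
    (hlow : ∃ x, F x < u) (hup : ∃ x, u ≤ F x) (x : ℝ) : quantile F u ≤ x ↔ u ≤ F x := by
  obtain ⟨a, ha⟩ := hlow
  have hbdd : BddBelow {x | u ≤ F x} :=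
    ⟨a, fun _ hy => le_of_not_gt fun hya => (ha.trans_le hy).not_ge (hmono hya.le)⟩
  have hmem : u ≤ F (quantile F u) := (isClosed_le continuous_const hF).csInf_mem hup hbdd
  exact ⟨fun h => hmem.trans (hmono h), fun h => csInf_le hbdd h⟩

theorem quantile_le_iff_of_mem_Ioo (hF : Continuous F) (hmono : Monotone F)
    (hbot : Tendsto F atBot (𝓝 0)) (htop : Tendsto F atTop (𝓝 1)) {u : ℝ} (hu : u ∈ Ioo 0 1)
    (x : ℝ) : quantile F u ≤ x ↔ u ≤ F x :=
  quantile_le_iff hF hmono (hbot.eventually (eventually_lt_nhds hu.1)).exists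
    (htop.eventually (eventually_ge_nhds hu.2)).exists x

theorem aemeasurable_quantile (hF : Continuous F) (hmono : Monotone F)
    (hbot : Tendsto F atBot (𝓝 0)) (htop : Tendsto F atTop (𝓝 1)) :
    AEMeasurable (quantile F) (volume.restrict (Ioo 0 1)) := by
  refine aemeasurable_restrict_of_monotoneOn measurableSet_Ioo fun u hu v hv huv => ?_
  exact (quantile_le_iff_of_mem_Ioo hF hmono hbot htop hu _).2
    (huv.trans ((quantile_le_iff_of_mem_Ioo hF hmono hbot htop hv _).1 le_rfl))

theorem map_quantile_Iic (hF : Continuous F) (hmono : Monotone F)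
    (hbot : Tendsto F atBot (𝓝 0)) (htop : Tendsto F atTop (𝓝 1)) (x : ℝ) :
    (volume.restrict (Ioo 0 1)).map (quantile F) (Iic x) = ENNReal.ofReal (F x) := by
  have hpre : quantile F ⁻¹' Iic x ∩ Ioo 0 1 = Iic (F x) ∩ Ioo 0 1 := by
    ext u
    simp only [mem_inter_iff, mem_preimage, mem_Iic, and_congr_left_iff]
    exact fun hu => quantile_le_iff_of_mem_Ioo hF hmono hbot htop hu x
  rw [Measure.map_apply_of_aemeasurable (aemeasurable_quantile hF hmono hbot htop)
    measurableSet_Iic, Measure.restrict_apply' measurableSet_Ioo, hpre,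
    volume_Iic_inter_Ioo (hmono.ge_of_tendsto htop x), sub_zero]

end Quantile

theorem map_quantile_eq_withDensity {F f : ℝ → ℝ} (hmono : Monotone F)
    (hbot : Tendsto F atBot (𝓝 0)) (htop : Tendsto F atTop (𝓝 1))
    (hdens : ∀ x, F x = ∫ t in Iic x, f t) (hf0 : ∀ x, 0 ≤ f x) :
    (volume.restrict (Ioo 0 1)).map (quantile F) =
      volume.withDensity fun t => ENNReal.ofReal (f t) := by
  have hint := integrableOn_Iic_of_tendsto_integral_Iic one_ne_zero (htop.congr hdens)
  have hF : Continuous F := (continuous_integral_Iic hint).congr fun x => (hdens x).symm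
  refine Measure.ext_of_Iic _ _ fun x => ?_
  rw [map_quantile_Iic hF hmono hbot htop, withDensity_apply _ measurableSet_Iic,
    ← ofReal_integral_eq_lintegral_ofReal (hint x) (ae_of_all _ hf0), hdens]

theorem entropy_eq_integral_log_quantile_density_general
    (F f Q q : ℝ → ℝ)
    (hmono : Monotone F)
    (hbot : Tendsto F atBot (nhds 0)) (htop : Tendsto F atTop (nhds 1))
    (hdens : ∀ x, F x = ∫ t in Set.Iic x, f t)
    (hf0 : ∀ x, 0 ≤ f x)
    (hQ : ∀ t, Q t = sInf {x | t ≤ F x})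
    (hq : ∀ x, q x = 1 / f (Q x)) :
    - ∫ x, f x * Real.log (f x) = ∫ x in Set.Ioo (0 : ℝ) 1, Real.log (q x) := by
  obtain rfl : Q = quantile F := funext hQ
  have hint := integrableOn_Iic_of_tendsto_integral_Iic one_ne_zero (htop.congr hdens)
  have hF : Continuous F := (continuous_integral_Iic hint).congr fun x => (hdens x).symm
  have hf : AEMeasurable f :=
    (locallyIntegrable_of_forall_integrableOn_Iic hint).aestronglyMeasurable.aemeasurable
  have hmap := map_quantile_eq_withDensity hmono hbot htop hdens hf0
  have hlog : AEStronglyMeasurable (fun x => Real.log (f x))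
      ((volume.restrict (Ioo 0 1)).map (quantile F)) :=
    hmap ▸ ((Real.measurable_log.comp_aemeasurable hf).mono_ac
      (withDensity_absolutelyContinuous _ _)).aestronglyMeasurable
  calc - ∫ x, f x * Real.log (f x)
      = - ∫ x, Real.log (f x) ∂volume.withDensity fun t => ENNReal.ofReal (f t) := by
        rw [integral_withDensity_ofReal_eq_integral_smul hf (ae_of_all _ hf0)]; rfl
    _ = - ∫ u in Ioo 0 1, Real.log (f (quantile F u)) := by
        rw [← hmap, integral_map (aemeasurable_quantile hF hmono hbot htop) hlog]
    _ = ∫ x in Ioo 0 1, Real.log (q x) := by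
        simp only [hq, one_div, Real.log_inv, integral_neg]

/-- If `F` is a cdf on `ℝ` with density `f > 0` on `(x_F, x^F)`, quantile function
`Q(t) = inf {x : F x ≥ t}` and quantile density `q = 1/(f ∘ Q)`, and the differential
entropy `H = -∫ f log f` is finite, then `H = ∫_0^1 log q(x) dx`. -/
theorem entropy_eq_integral_log_quantile_density
    (F f Q q : ℝ → ℝ) (xF xS : EReal)
    (hmono : Monotone F)
    (hbot : Tendsto F atBot (nhds 0)) (htop : Tendsto F atTop (nhds 1))
    (hdens : ∀ x, F x = ∫ t in Set.Iic x, f t)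
    (hf0 : ∀ x, 0 ≤ f x)
    (hxF : xF = sSup ((fun x : ℝ => (x : EReal)) '' {x | F x = 0}))
    (hxS : xS = sInf ((fun x : ℝ => (x : EReal)) '' {x | F x = 1}))
    (hfpos : ∀ x : ℝ, xF < (x : EReal) → (x : EReal) < xS → 0 < f x)
    (hQ : ∀ t, Q t = sInf {x | t ≤ F x})
    (hq : ∀ x, q x = 1 / f (Q x))
    (hH : Integrable (fun x => f x * Real.log (f x))) :
    - ∫ x, f x * Real.log (f x) = ∫ x in Set.Ioo (0 : ℝ) 1, Real.log (q x) :=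
  entropy_eq_integral_log_quantile_density_general F f Q q hmono hbot htop hdens hf0 hQ hq
end

section
/- Let q : (0,1) → (0,∞) be continuously differentiable with ∫_0^1 log² q(x) dx < ∞, and set J = q'/q. Then ∫_0^1 ∫_0^1 J(u) J(v) (min(u,v) - uv) du dv = ∫_0^1 log² q(x) dx - (∫_0^1 log q(x) dx)², provided t·log q(t) → 0 and (1-t)·log q(t) → 0 at the endpoints. -/
/-!
Write `L = log q`, `M = ∫₀¹ L` and `G w = w M - ∫₀ʷ L`. For fixed `w`, integrating by parts on
`(0, w)` and on `(w, 1)` (the boundary terms vanish by the endpoint conditions on `t log q(t)`)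
gives `∫₀¹ J(v) (min(v, w) - v w) dv = G w`, so by Fubini the double integral is `∫₀¹ J G`.
Since `G' = M - L` and `G` vanishes at both ends, a second integration by parts turns this into
`∫₀¹ (L - M)²`. Its boundary term `(L - M)(x) G(x)` has a limit at `0`, since its derivative is
integrable, and is bounded in absolute value by `(∫₀ˣ (L - M)² + x (L(x) - M)²) / 2`. The integral
tends to `0`, and `x (L(x) - M)²` cannot stay away from `0` near `0` because `(L - M)²` is
integrable while `1 / x` is not; so the limit is `0`, and likewise at `1`.
-/

open MeasureTheory Filter Set Topology intervalIntegral

theorem eq_zero_of_tendsto_of_frequently_abs_lt {α : Type*} {l : Filter α} {F : α → ℝ} {A : ℝ}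
    (hF : Tendsto F l (𝓝 A)) (hsmall : ∀ ε > 0, ∃ᶠ x in l, |F x| < ε) : A = 0 := by
  by_contra hA
  have hA' : 0 < |A| := abs_pos.2 hA
  have hev : ∀ᶠ x in l, |A| / 2 < |F x| := hF.abs.eventually (lt_mem_nhds (by linarith))
  obtain ⟨x, hx, hx'⟩ := ((hsmall _ (half_pos hA')).and_eventually hev).exists
  exact lt_asymm hx hx'

theorem exists_tendsto_of_hasDerivAt_of_intervalIntegrable {F f : ℝ → ℝ} {a b : ℝ}
    (hab : a < b) (hF : ∀ x ∈ Ioo a b, HasDerivAt F (f x) x)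
    (hf : IntervalIntegrable f volume a b) :
    (∃ A, Tendsto F (𝓝[>] a) (𝓝 A)) ∧ ∃ B, Tendsto F (𝓝[<] b) (𝓝 B) := by
  have hIcc : uIcc a b = Icc a b := uIcc_of_le hab.le
  obtain ⟨m, hm⟩ := nonempty_Ioo.2 hab
  have hcont : ContinuousOn (fun x => F m + ∫ t in m..x, f t) (Icc a b) := by
    have := continuousOn_primitive_interval' hf (hIcc ▸ Ioo_subset_Icc_self hm)
    exact continuousOn_const.add (hIcc ▸ this)
  have hEq : EqOn F (fun x => F m + ∫ t in m..x, f t) (Ioo a b) := by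
    intro x hx
    have hsub := ordConnected_Ioo.uIcc_subset hm hx
    show F x = F m + _
    rw [integral_eq_sub_of_hasDerivAt (fun y hy => hF y (hsub hy))
      (hf.mono_set (hsub.trans (hIcc ▸ Ioo_subset_Icc_self)))]
    ring
  refine ⟨⟨_, ((hcont a (left_mem_Icc.2 hab.le)).mono_of_mem_nhdsWithin
      (Icc_mem_nhdsGT hab)).tendsto.congr' ?_⟩,
    ⟨_, ((hcont b (right_mem_Icc.2 hab.le)).mono_of_mem_nhdsWithin
      (Icc_mem_nhdsLT hab)).tendsto.congr' ?_⟩⟩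
  · filter_upwards [Ioo_mem_nhdsGT hab] with x hx using (hEq hx).symm
  · filter_upwards [Ioo_mem_nhdsLT hab] with x hx using (hEq hx).symm

theorem integral_eq_zero_of_hasDerivAt_of_frequently_abs_lt {F f : ℝ → ℝ} {a b : ℝ}
    (hab : a < b) (hF : ∀ x ∈ Ioo a b, HasDerivAt F (f x) x)
    (hf : IntervalIntegrable f volume a b)
    (ha : ∀ ε > 0, ∃ᶠ x in 𝓝[>] a, |F x| < ε) (hb : ∀ ε > 0, ∃ᶠ x in 𝓝[<] b, |F x| < ε) :
    ∫ x in a..b, f x = 0 := by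
  obtain ⟨⟨A, hA⟩, B, hB⟩ := exists_tendsto_of_hasDerivAt_of_intervalIntegrable hab hF hf
  rw [integral_eq_sub_of_hasDerivAt_of_tendsto hab hF hf hA hB,
    eq_zero_of_tendsto_of_frequently_abs_lt hA ha, eq_zero_of_tendsto_of_frequently_abs_lt hB hb,
    sub_zero]

theorem exists_abs_sub_mul_lt_of_intervalIntegrable {f : ℝ → ℝ} {u v c ε : ℝ} (huv : u < v)
    (hc : c ∈ Icc u v) (hf : IntervalIntegrable f volume u v) (hε : 0 < ε) :
    ∃ x ∈ Ioo u v, |x - c| * f x < ε := by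
  by_contra! h
  have hbound : ∀ x ∈ Ioo u v, ‖(x - c)⁻¹‖ ≤ ε⁻¹ * f x := by
    intro x hx
    have hεx := h x hx
    have hpos : 0 < |x - c| := abs_pos.2 fun h0 => by
      rw [h0, abs_zero, zero_mul] at hεx; linarith
    rw [norm_inv, Real.norm_eq_abs, inv_le_iff_one_le_mul₀ hpos]
    calc 1 = ε⁻¹ * ε := (inv_mul_cancel₀ hε.ne').symm
      _ ≤ ε⁻¹ * (|x - c| * f x) := by gcongr
      _ = _ := by ring
  have hinv : IntervalIntegrable (fun x => (x - c)⁻¹) volume u v := by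
    rw [intervalIntegrable_iff_integrableOn_Ioo_of_le huv.le] at hf ⊢
    refine (hf.const_mul ε⁻¹).mono' (measurable_id.sub_const c).inv.aestronglyMeasurable ?_
    filter_upwards [ae_restrict_mem measurableSet_Ioo] with x hx using hbound x hx
  simp [huv.ne, uIcc_of_le huv.le, hc] at hinv

theorem frequently_sub_mul_lt_nhdsGT {f : ℝ → ℝ} {a b ε : ℝ} (hab : a < b)
    (hf : IntervalIntegrable f volume a b) (hε : 0 < ε) :
    ∃ᶠ x in 𝓝[>] a, (x - a) * f x < ε := by
  rw [frequently_iff]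
  intro U hU
  obtain ⟨d, hd, hdU⟩ := mem_nhdsGT_iff_exists_Ioo_subset.1 hU
  have had : a < min d b := lt_min hd hab
  obtain ⟨x, hx, hxε⟩ := exists_abs_sub_mul_lt_of_intervalIntegrable had
    (left_mem_Icc.2 had.le)
    (hf.mono_set (uIcc_subset_uIcc_left (by simp [uIcc_of_le hab.le, had.le]))) hε
  refine ⟨x, hdU ⟨hx.1, hx.2.trans_le (min_le_left _ _)⟩, ?_⟩
  rwa [abs_of_pos (sub_pos.2 hx.1)] at hxε

theorem frequently_sub_mul_lt_nhdsLT {f : ℝ → ℝ} {a b ε : ℝ} (hab : a < b)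
    (hf : IntervalIntegrable f volume a b) (hε : 0 < ε) :
    ∃ᶠ x in 𝓝[<] b, (b - x) * f x < ε := by
  rw [frequently_iff]
  intro U hU
  obtain ⟨d, hd, hdU⟩ := mem_nhdsLT_iff_exists_Ioo_subset.1 hU
  have hdb : max d a < b := max_lt hd hab
  obtain ⟨x, hx, hxε⟩ := exists_abs_sub_mul_lt_of_intervalIntegrable hdb
    (right_mem_Icc.2 hdb.le)
    (hf.mono_set (uIcc_subset_uIcc_right (by simp [uIcc_of_le hab.le, hdb.le]))) hε
  refine ⟨x, hdU ⟨(le_max_left _ _).trans_lt hx.1, hx.2⟩, ?_⟩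
  rwa [abs_of_neg (sub_neg.2 hx.2), neg_sub] at hxε

theorem abs_mul_integral_le {H : ℝ → ℝ} {u v : ℝ} (huv : u ≤ v)
    (hH : IntervalIntegrable H volume u v) (hH2 : IntervalIntegrable (fun x => H x ^ 2) volume u v)
    (c : ℝ) : |c * ∫ x in u..v, H x| ≤ ((∫ x in u..v, H x ^ 2) + (v - u) * c ^ 2) / 2 := by
  calc |c * ∫ x in u..v, H x| = |∫ x in u..v, c * H x| := by
        rw [intervalIntegral.integral_const_mul]
    _ ≤ ∫ x in u..v, |c * H x| := abs_integral_le_integral_abs huv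
    _ ≤ ∫ x in u..v, (H x ^ 2 + c ^ 2) / 2 := by
        refine integral_mono_on huv (hH.const_mul c).abs
          ((hH2.add intervalIntegrable_const).div_const 2) fun x _ => ?_
        have := two_mul_le_add_sq |H x| |c|
        rw [sq_abs, sq_abs] at this
        rw [abs_mul]
        linarith
    _ = _ := by
        rw [intervalIntegral.integral_div, integral_add hH2 intervalIntegrable_const,
          intervalIntegral.integral_const, smul_eq_mul]

theorem frequently_abs_mul_integral_lt_nhdsGT {H : ℝ → ℝ} {a b ε : ℝ} (hab : a < b)
    (hH : IntervalIntegrable H volume a b) (hH2 : IntervalIntegrable (fun x => H x ^ 2) volume a b)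
    (hε : 0 < ε) : ∃ᶠ x in 𝓝[>] a, |H x * ∫ t in a..x, H t| < ε := by
  have htail : Tendsto (fun x => ∫ t in a..x, H t ^ 2) (𝓝[>] a) (𝓝 0) := by
    have := continuousOn_primitive_interval' hH2 left_mem_uIcc a left_mem_uIcc
    rw [uIcc_of_le hab.le] at this
    simpa using (this.mono_of_mem_nhdsWithin (Icc_mem_nhdsGT hab)).tendsto
  refine ((frequently_sub_mul_lt_nhdsGT hab hH2 hε).and_eventually
    ((htail.eventually (gt_mem_nhds hε)).and (Ioo_mem_nhdsGT hab))).mono ?_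
  rintro x ⟨hsq, htx, hx⟩
  have hsub : uIcc a x ⊆ uIcc a b :=
    uIcc_subset_uIcc_left (by rw [uIcc_of_le hab.le]; exact Ioo_subset_Icc_self hx)
  calc |H x * ∫ t in a..x, H t| ≤ ((∫ t in a..x, H t ^ 2) + (x - a) * H x ^ 2) / 2 :=
        abs_mul_integral_le hx.1.le (hH.mono_set hsub) (hH2.mono_set hsub) _
    _ < ε := by linarith

theorem frequently_abs_mul_integral_lt_nhdsLT {H : ℝ → ℝ} {a b ε : ℝ} (hab : a < b)
    (hH : IntervalIntegrable H volume a b) (hH2 : IntervalIntegrable (fun x => H x ^ 2) volume a b)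
    (hε : 0 < ε) : ∃ᶠ x in 𝓝[<] b, |H x * ∫ t in x..b, H t| < ε := by
  have htail : Tendsto (fun x => ∫ t in x..b, H t ^ 2) (𝓝[<] b) (𝓝 0) := by
    have := continuousOn_primitive_interval' hH2 right_mem_uIcc b right_mem_uIcc
    rw [uIcc_of_le hab.le] at this
    have hneg := (this.mono_of_mem_nhdsWithin (Icc_mem_nhdsLT hab)).tendsto.neg
    rw [integral_same, neg_zero] at hneg
    exact hneg.congr fun x => (integral_symm b x).symm
  refine ((frequently_sub_mul_lt_nhdsLT hab hH2 hε).and_eventually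
    ((htail.eventually (gt_mem_nhds hε)).and (Ioo_mem_nhdsLT hab))).mono ?_
  rintro x ⟨hsq, htx, hx⟩
  have hsub : uIcc x b ⊆ uIcc a b :=
    uIcc_subset_uIcc_right (by rw [uIcc_of_le hab.le]; exact Ioo_subset_Icc_self hx)
  calc |H x * ∫ t in x..b, H t| ≤ ((∫ t in x..b, H t ^ 2) + (b - x) * H x ^ 2) / 2 :=
        abs_mul_integral_le hx.2.le (hH.mono_set hsub) (hH2.mono_set hsub) _
    _ < ε := by linarith

theorem integral_deriv_mul_primitive_eq_neg_integral_sq {H J : ℝ → ℝ} {a b : ℝ}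
    (hab : a < b) (hH : ∀ x ∈ Ioo a b, HasDerivAt H (J x) x)
    (hH1 : IntervalIntegrable H volume a b)
    (hH2 : IntervalIntegrable (fun x => H x ^ 2) volume a b) (hmean : ∫ x in a..b, H x = 0)
    (hJP : IntervalIntegrable (fun x => J x * ∫ t in a..x, H t) volume a b) :
    ∫ x in a..b, J x * ∫ t in a..x, H t = -∫ x in a..b, H x ^ 2 := by
  have hIcc : ∀ x ∈ Ioo a b, x ∈ uIcc a b := fun x hx => by
    rw [uIcc_of_le hab.le]; exact Ioo_subset_Icc_self hx
  have hP : ∀ x ∈ Ioo a b, HasDerivAt (fun y => ∫ t in a..y, H t) (H x) x := fun x hx =>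
    integral_hasDerivAt_right (hH1.mono_set (uIcc_subset_uIcc_left (hIcc x hx)))
      (ContinuousOn.stronglyMeasurableAtFilter isOpen_Ioo
        (fun y hy => (hH y hy).continuousAt.continuousWithinAt) x hx) (hH x hx).continuousAt
  have hsplit : ∀ x ∈ Ioo a b, ∫ t in a..x, H t = -∫ t in x..b, H t := fun x hx => by
    rw [eq_neg_iff_add_eq_zero, integral_add_adjacent_intervals
      (hH1.mono_set (uIcc_subset_uIcc_left (hIcc x hx)))
      (hH1.mono_set (uIcc_subset_uIcc_right (hIcc x hx))), hmean]
  have hHH : IntervalIntegrable (fun x => H x * H x) volume a b := by simpa only [sq] using hH2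
  have hboundary := integral_eq_zero_of_hasDerivAt_of_frequently_abs_lt hab
    (fun x hx => (hH x hx).fun_mul (hP x hx)) (hJP.add hHH)
    (fun ε hε => frequently_abs_mul_integral_lt_nhdsGT hab hH1 hH2 hε)
    (fun ε hε => (frequently_abs_mul_integral_lt_nhdsLT hab hH1 hH2 hε).mp <| by
      filter_upwards [Ioo_mem_nhdsLT hab] with x hx h
      rwa [hsplit x hx, mul_neg, abs_neg])
  rw [integral_add hJP hHH] at hboundary
  simp only [sq]
  linarith

theorem integral_sub_mul_deriv_eq_of_tendsto_nhdsGT {L J : ℝ → ℝ} {a w : ℝ} (haw : a < w)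
    (hL : ∀ x ∈ Ioc a w, HasDerivAt L (J x) x) (hL1 : IntervalIntegrable L volume a w)
    (hJ : IntervalIntegrable (fun x => (x - a) * J x) volume a w)
    (hlim : Tendsto (fun x => (x - a) * L x) (𝓝[>] a) (𝓝 0)) :
    ∫ x in a..w, (x - a) * J x = (w - a) * L w - ∫ x in a..w, L x := by
  have hderiv : ∀ x ∈ Ioo a w,
      HasDerivAt (fun y => (y - a) * L y) (L x + (x - a) * J x) x := fun x hx => by
    simpa using ((hasDerivAt_id x).sub_const a).fun_mul (hL x (Ioo_subset_Ioc_self hx))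
  have hw : Tendsto (fun x => (x - a) * L x) (𝓝[<] w) (𝓝 ((w - a) * L w)) :=
    ((continuousAt_id.sub continuousAt_const).mul
      (hL w ⟨haw, le_rfl⟩).continuousAt).tendsto.mono_left nhdsWithin_le_nhds
  have := integral_eq_sub_of_hasDerivAt_of_tendsto haw hderiv (hL1.add hJ) hlim hw
  rw [integral_add hL1 hJ] at this
  linarith

theorem integral_sub_mul_deriv_eq_of_tendsto_nhdsLT {L J : ℝ → ℝ} {w b : ℝ} (hwb : w < b)
    (hL : ∀ x ∈ Ico w b, HasDerivAt L (J x) x) (hL1 : IntervalIntegrable L volume w b)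
    (hJ : IntervalIntegrable (fun x => (b - x) * J x) volume w b)
    (hlim : Tendsto (fun x => (b - x) * L x) (𝓝[<] b) (𝓝 0)) :
    ∫ x in w..b, (b - x) * J x = (∫ x in w..b, L x) - (b - w) * L w := by
  have hderiv : ∀ x ∈ Ioo w b,
      HasDerivAt (fun y => (b - y) * L y) (-L x + (b - x) * J x) x := fun x hx => by
    simpa using ((hasDerivAt_id x).const_sub b).fun_mul (hL x (Ioo_subset_Ico_self hx))
  have hw : Tendsto (fun x => (b - x) * L x) (𝓝[>] w) (𝓝 ((b - w) * L w)) :=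
    ((continuousAt_const.sub continuousAt_id).mul
      (hL w ⟨le_rfl, hwb⟩).continuousAt).tendsto.mono_left nhdsWithin_le_nhds
  have hL1' : IntervalIntegrable (fun x => -L x) volume w b := hL1.neg
  have := integral_eq_sub_of_hasDerivAt_of_tendsto hwb hderiv (hL1'.add hJ) hw hlim
  rw [integral_add hL1' hJ, intervalIntegral.integral_neg] at this
  linarith

theorem integral_deriv_mul_min_sub_mul {L J : ℝ → ℝ}
    (hL : ∀ x ∈ Ioo (0 : ℝ) 1, HasDerivAt L (J x) x) (hL1 : IntervalIntegrable L volume 0 1)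
    (hlim0 : Tendsto (fun x => x * L x) (𝓝[>] 0) (𝓝 0))
    (hlim1 : Tendsto (fun x => (1 - x) * L x) (𝓝[<] 1) (𝓝 0))
    {w : ℝ} (hw : w ∈ Ioo (0 : ℝ) 1)
    (hJ : IntervalIntegrable (fun x => J x * (min x w - x * w)) volume 0 1) :
    ∫ x in (0 : ℝ)..1, J x * (min x w - x * w)
      = w * (∫ x in (0 : ℝ)..1, L x) - ∫ x in (0 : ℝ)..w, L x := by
  obtain ⟨hw0, hw1⟩ := hw
  have hw01 : w ∈ uIcc (0 : ℝ) 1 := by rw [uIcc_of_le zero_le_one]; exact ⟨hw0.le, hw1.le⟩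
  have hleft : EqOn (fun x => J x * (min x w - x * w)) (fun x => (1 - w) * ((x - 0) * J x))
      (uIcc 0 w) := fun x hx => by
    rw [uIcc_of_le hw0.le] at hx
    simp only [min_eq_left hx.2]; ring
  have hright : EqOn (fun x => J x * (min x w - x * w)) (fun x => w * ((1 - x) * J x))
      (uIcc w 1) := fun x hx => by
    rw [uIcc_of_le hw1.le] at hx
    simp only [min_eq_right hx.1]; ring
  have hJl := hJ.mono_set (uIcc_subset_uIcc_left hw01)
  have hJr := hJ.mono_set (uIcc_subset_uIcc_right hw01)
  have hJl' : IntervalIntegrable (fun x => (x - 0) * J x) volume 0 w :=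
    (hJl.const_mul (1 - w)⁻¹).congr fun x hx => by
      rw [show J x * (min x w - x * w) = _ from hleft (uIoc_subset_uIcc hx),
        inv_mul_cancel_left₀ (sub_ne_zero.2 hw1.ne')]
  have hJr' : IntervalIntegrable (fun x => (1 - x) * J x) volume w 1 :=
    (hJr.const_mul w⁻¹).congr fun x hx => by
      rw [show J x * (min x w - x * w) = _ from hright (uIoc_subset_uIcc hx),
        inv_mul_cancel_left₀ hw0.ne']
  have hLl := hL1.mono_set (uIcc_subset_uIcc_left hw01)
  have hLr := hL1.mono_set (uIcc_subset_uIcc_right hw01)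
  rw [← integral_add_adjacent_intervals hJl hJr, integral_congr hleft, integral_congr hright,
    intervalIntegral.integral_const_mul, intervalIntegral.integral_const_mul,
    integral_sub_mul_deriv_eq_of_tendsto_nhdsGT hw0 (fun x hx => hL x ⟨hx.1, hx.2.trans_lt hw1⟩)
      hLl hJl' (by simpa only [sub_zero] using hlim0),
    integral_sub_mul_deriv_eq_of_tendsto_nhdsLT hw1 (fun x hx => hL x ⟨hw0.trans_le hx.1, hx.2⟩)
      hLr hJr' hlim1,
    ← integral_add_adjacent_intervals hLl hLr]
  ring

theorem ae_integral_deriv_mul_deriv_mul_min_sub_mul {L J : ℝ → ℝ}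
    (hL : ∀ x ∈ Ioo (0 : ℝ) 1, HasDerivAt L (J x) x) (hL1 : IntervalIntegrable L volume 0 1)
    (hlim0 : Tendsto (fun x => x * L x) (𝓝[>] 0) (𝓝 0))
    (hlim1 : Tendsto (fun x => (1 - x) * L x) (𝓝[<] 1) (𝓝 0))
    (hJJ : Integrable (fun p : ℝ × ℝ => J p.1 * J p.2 * (min p.1 p.2 - p.1 * p.2))
      ((volume.restrict (Ioo (0 : ℝ) 1)).prod (volume.restrict (Ioo (0 : ℝ) 1)))) :
    ∀ᵐ u ∂volume.restrict (Ioo (0 : ℝ) 1),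
      ∫ v in Ioo (0 : ℝ) 1, J u * J v * (min u v - u * v)
        = J u * (u * (∫ x in (0 : ℝ)..1, L x) - ∫ x in (0 : ℝ)..u, L x) := by
  filter_upwards [hJJ.prod_right_ae, ae_restrict_mem measurableSet_Ioo] with u hu hu01
  have hsymm : ∀ v, J u * J v * (min u v - u * v) = J u * (J v * (min v u - v * u)) := fun v => by
    rw [min_comm, mul_comm v u]; ring
  simp only [hsymm] at hu ⊢
  rw [MeasureTheory.integral_const_mul]
  rcases eq_or_ne (J u) 0 with h0 | h0
  · simp [h0]
  rw [integrable_const_mul_iff (Ne.isUnit h0), ← IntegrableOn,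
    ← intervalIntegrable_iff_integrableOn_Ioo_of_le zero_le_one] at hu
  rw [← integral_Ioc_eq_integral_Ioo, ← intervalIntegral.integral_of_le zero_le_one,
    integral_deriv_mul_min_sub_mul hL hL1 hlim0 hlim1 hu01 hu]

theorem integral_deriv_mul_eq_integral_sq_sub_sq {L J : ℝ → ℝ}
    (hL : ∀ x ∈ Ioo (0 : ℝ) 1, HasDerivAt L (J x) x) (hL1 : IntervalIntegrable L volume 0 1)
    (hL2 : IntervalIntegrable (fun x => L x ^ 2) volume 0 1)
    (hJG : IntervalIntegrable
      (fun u => J u * (u * (∫ x in (0 : ℝ)..1, L x) - ∫ x in (0 : ℝ)..u, L x)) volume 0 1) :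
    ∫ u in (0 : ℝ)..1, J u * (u * (∫ x in (0 : ℝ)..1, L x) - ∫ x in (0 : ℝ)..u, L x)
      = (∫ x in (0 : ℝ)..1, L x ^ 2) - (∫ x in (0 : ℝ)..1, L x) ^ 2 := by
  set M := ∫ x in (0 : ℝ)..1, L x
  have hprim : EqOn (fun u => J u * ∫ x in (0 : ℝ)..u, (L x - M))
      (fun u => -(J u * (u * M - ∫ x in (0 : ℝ)..u, L x))) (uIcc 0 1) := fun u hu => by
    simp only
    rw [integral_sub (hL1.mono_set (uIcc_subset_uIcc_left hu)) intervalIntegrable_const,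
      intervalIntegral.integral_const, smul_eq_mul, sub_zero]
    ring
  have hexp : (fun x => (L x - M) ^ 2) = fun x => L x ^ 2 - 2 * M * L x + M ^ 2 := by
    ext x; ring
  have hH2 : IntervalIntegrable (fun x => (L x - M) ^ 2) volume 0 1 := by
    rw [hexp]; exact (hL2.sub (hL1.const_mul _)).add intervalIntegrable_const
  have hmean : ∫ x in (0 : ℝ)..1, (L x - M) = 0 := by
    rw [integral_sub hL1 intervalIntegrable_const, intervalIntegral.integral_const]; simp [M]
  have hvar := integral_deriv_mul_primitive_eq_neg_integral_sq zero_lt_one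
    (fun x hx => (hL x hx).sub_const M) (hL1.sub intervalIntegrable_const) hH2 hmean
    (hJG.neg.congr fun u hu => (hprim (uIoc_subset_uIcc hu)).symm)
  rw [integral_congr hprim, intervalIntegral.integral_neg, hexp,
    integral_add (hL2.sub (hL1.const_mul _)) intervalIntegrable_const,
    integral_sub hL2 (hL1.const_mul _), intervalIntegral.integral_const_mul,
    intervalIntegral.integral_const] at hvar
  simp only [sub_zero, smul_eq_mul, one_mul] at hvar
  linarith

theorem integral_integral_deriv_mul_deriv_mul_min_sub_mul {L J : ℝ → ℝ}
    (hL : ∀ x ∈ Ioo (0 : ℝ) 1, HasDerivAt L (J x) x)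
    (hL2 : IntegrableOn (fun x => L x ^ 2) (Ioo 0 1)) (hL1 : IntegrableOn L (Ioo 0 1))
    (hJJ : IntegrableOn (fun p : ℝ × ℝ => J p.1 * J p.2 * (min p.1 p.2 - p.1 * p.2))
      (Ioo 0 1 ×ˢ Ioo 0 1))
    (hlim0 : Tendsto (fun x => x * L x) (𝓝[>] 0) (𝓝 0))
    (hlim1 : Tendsto (fun x => (1 - x) * L x) (𝓝[<] 1) (𝓝 0)) :
    ∫ u in Ioo (0 : ℝ) 1, ∫ v in Ioo (0 : ℝ) 1, J u * J v * (min u v - u * v)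
      = (∫ x in Ioo (0 : ℝ) 1, L x ^ 2) - (∫ x in Ioo (0 : ℝ) 1, L x) ^ 2 := by
  have hIoo (f : ℝ → ℝ) : ∫ x in Ioo (0 : ℝ) 1, f x = ∫ x in (0 : ℝ)..1, f x := by
    rw [intervalIntegral.integral_of_le zero_le_one, integral_Ioc_eq_integral_Ioo]
  rw [← intervalIntegrable_iff_integrableOn_Ioo_of_le zero_le_one] at hL1 hL2
  have hprod : Integrable (fun p : ℝ × ℝ => J p.1 * J p.2 * (min p.1 p.2 - p.1 * p.2))
      ((volume.restrict (Ioo (0 : ℝ) 1)).prod (volume.restrict (Ioo (0 : ℝ) 1))) := by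
    rwa [Measure.prod_restrict, ← Measure.volume_eq_prod]
  have hinner := ae_integral_deriv_mul_deriv_mul_min_sub_mul hL hL1 hlim0 hlim1 hprod
  rw [integral_congr_ae hinner, hIoo, hIoo, hIoo,
    integral_deriv_mul_eq_integral_sq_sub_sq hL hL1 hL2
      ((intervalIntegrable_iff_integrableOn_Ioo_of_le zero_le_one).2
        (hprod.integral_prod_left.congr hinner))]

/-- If `q : (0,1) → (0,∞)` is continuously differentiable with
`∫_0^1 log² q < ∞` and score `J = q'/q`, and `t log q(t) → 0`, `(1-t) log q(t) → 0`
at the endpoints, then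
`∫_0^1 ∫_0^1 J(u) J(v) (min(u,v) - uv) du dv = ∫_0^1 log² q - (∫_0^1 log q)²`. -/
theorem variance_formula (q : ℝ → ℝ)
    (hqpos : ∀ x ∈ Set.Ioo (0 : ℝ) 1, 0 < q x)
    (hqC1 : ContDiffOn ℝ 1 q (Set.Ioo (0 : ℝ) 1))
    (hlog2 : IntegrableOn (fun x => Real.log (q x) ^ 2) (Set.Ioo (0 : ℝ) 1))
    (hlog : IntegrableOn (fun x => Real.log (q x)) (Set.Ioo (0 : ℝ) 1))
    (hJint : IntegrableOn
      (fun p : ℝ × ℝ =>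
        (deriv q p.1 / q p.1) * (deriv q p.2 / q p.2) * (min p.1 p.2 - p.1 * p.2))
      (Set.Ioo (0 : ℝ) 1 ×ˢ Set.Ioo (0 : ℝ) 1))
    (hlim0 : Tendsto (fun t : ℝ => t * Real.log (q t))
      (nhdsWithin 0 (Set.Ioi (0 : ℝ))) (nhds 0))
    (hlim1 : Tendsto (fun t : ℝ => (1 - t) * Real.log (q t))
      (nhdsWithin 1 (Set.Iio (1 : ℝ))) (nhds 0)) :
    (∫ u in Set.Ioo (0 : ℝ) 1, ∫ v in Set.Ioo (0 : ℝ) 1,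
        (deriv q u / q u) * (deriv q v / q v) * (min u v - u * v))
      = (∫ x in Set.Ioo (0 : ℝ) 1, Real.log (q x) ^ 2)
        - (∫ x in Set.Ioo (0 : ℝ) 1, Real.log (q x)) ^ 2 := by
  have hscore : ∀ x ∈ Ioo (0 : ℝ) 1,
      HasDerivAt (fun y => Real.log (q y)) (deriv q x / q x) x := fun x hx =>
    ((hqC1.differentiableOn one_ne_zero).differentiableAt
      (isOpen_Ioo.mem_nhds hx)).hasDerivAt.log (hqpos x hx).ne'
  exact integral_integral_deriv_mul_deriv_mul_min_sub_mul hscore hlog2 hlog hJint hlim0 hlim1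
end
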